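/- Let k ≥ 1 and let c^(0), c^(1), …, c^(k) be compositions (possibly empty) with c^(k) nonempty, and set N = 3k + Σ_{i=0}^{k} |c^(i)|. Then P(c^(0) ⊕ (3) ⊕ c^(1) ⊕ (3) ⊕ ⋯ ⊕ (3) ⊕ c^(k)) = [N! / ((|c^(0)|+1)! · ∏_{i=1}^{k−1} (|c^(i)|+3)! · (|c^(k)|+2)!)] · P(c^(0) ⊕ (1)) · (∏_{i=1}^{k−1} P((2) ⊕ c^(i) ⊕ (1))) · P((2) ⊕ c^(k)). -/

import Mathlib

/-- `i` (1-based, with `1 < i < n`) is a peak of the permutation `σ` of `{1,…,n}`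
(represented as a permutation of `Fin n`, position `j` (1-based) being index `j-1`). -/
def IsPeak {n : ℕ} (σ : Equiv.Perm (Fin n)) (i : ℕ) : Prop :=
  ∃ (h₂ : 2 ≤ i) (h₃ : i < n),
    σ ⟨i - 2, by omega⟩ < σ ⟨i - 1, by omega⟩ ∧ σ ⟨i, h₃⟩ < σ ⟨i - 1, by omega⟩

open Classical in
/-- The peak set of a permutation of `{1,…,n}` (as a set of 1-based positions). -/
noncomputable def peakSet {n : ℕ} (σ : Equiv.Perm (Fin n)) : Finset ℕ :=
  (Finset.range n).filter (fun i => IsPeak σ i)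

/-- `P(S;n)`: the number of permutations of `{1,…,n}` with peak set `S`. -/
noncomputable def numPeakSet (n : ℕ) (S : Finset ℕ) : ℕ :=
  Nat.card {σ : Equiv.Perm (Fin n) // peakSet σ = S}

/-- `c` is a composition of `n`: a list of positive integers summing to `n`. -/
def IsComposition (n : ℕ) (c : List ℕ) : Prop :=
  (∀ x ∈ c, 0 < x) ∧ c.sum = n

/-- The set `S(c)` of proper partial sums of the composition `c`. -/
def compPeaks (c : List ℕ) : Finset ℕ :=
  (Finset.range (c.length - 1)).image (fun i => (c.take (i + 1)).sum)

/-- `P(c)`: the number of permutations of `{1,…,|c|}` whose peak set is `S(c)`. -/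
noncomputable def Pcomp (c : List ℕ) : ℕ :=
  numPeakSet c.sum (compPeaks c)

/-- A composition is maximal if `P(b) ≤ P(c)` for every composition `b` of the same size. -/
def IsMaximal (c : List ℕ) : Prop :=
  ∀ b : List ℕ, IsComposition c.sum b → Pcomp b ≤ Pcomp c

/-- `chain3 c k = c 0 ⊕ (3) ⊕ c 1 ⊕ (3) ⊕ ⋯ ⊕ (3) ⊕ c k`. -/
def chain3 (c : ℕ → List ℕ) : ℕ → List ℕ
  | 0 => c 0
  | k + 1 => chain3 c k ++ [3] ++ c (k + 1)

/-!
Cut a permutation with peak set `S(d ⊕ (3) ⊕ e)` after position `|d| + 1`. The peak at `|d|`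
forces a descent into the cut and the peak at `|d| + 3` an ascent out of it, so positions
`|d| + 1` and `|d| + 2` are never peaks, whichever values the two halves receive. Hence the peak
set is `S(d ⊕ (1))` on the standardized first half and `S((2) ⊕ e)`, shifted, on the second, and
`P(d ⊕ (3) ⊕ e) = C(|d| + |e| + 3, |d| + 1) · P(d ⊕ (1)) · P((2) ⊕ e)`. Peeling off the parts
`(3)` one at a time gives the formula.
-/

open Finset Nat

lemma factorial_add_eq_choose_mul (i j : ℕ) : (i + j)! = (i + j).choose i * i ! * j ! := by
  rw [Nat.choose_symm_add, Nat.add_choose_mul_factorial_mul_factorial]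

lemma card_compl_of_card_eq {m r : ℕ} {A : Finset (Fin (m + r))} (hA : #A = m) : #Aᶜ = r := by
  rw [card_compl, hA, Fintype.card_fin, Nat.add_sub_cancel_left]

section JoinPerm

variable {m r : ℕ} (A : Finset (Fin (m + r))) (hA : #A = m)

/-- The permutation of `Fin (m + r)` that takes the values `A` on its first `m` positions, in the
relative order given by `σ₁`, and the values `Aᶜ` on its last `r` positions, in the relative
order given by `σ₂`. -/
def joinPerm (σ₁ : Equiv.Perm (Fin m)) (σ₂ : Equiv.Perm (Fin r)) : Equiv.Perm (Fin (m + r)) :=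
  finSumFinEquiv.symm.trans <| (σ₁.sumCongr σ₂).trans <|
    ((A.orderIsoOfFin hA).toEquiv.sumCongr
      ((Aᶜ.orderIsoOfFin (card_compl_of_card_eq hA)).toEquiv.trans
        (Equiv.subtypeEquivRight fun _ => mem_compl))).trans (Equiv.sumCompl (· ∈ A))

variable (σ₁ : Equiv.Perm (Fin m)) (σ₂ : Equiv.Perm (Fin r))

@[simp]
lemma joinPerm_castAdd (i : Fin m) :
    joinPerm A hA σ₁ σ₂ (Fin.castAdd r i) = A.orderEmbOfFin hA (σ₁ i) := by
  simp [joinPerm]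

@[simp]
lemma joinPerm_natAdd (j : Fin r) :
    joinPerm A hA σ₁ σ₂ (Fin.natAdd m j) =
      Aᶜ.orderEmbOfFin (card_compl_of_card_eq hA) (σ₂ j) := by
  simp [joinPerm]

lemma image_joinPerm_castAdd :
    univ.image (fun i => joinPerm A hA σ₁ σ₂ (Fin.castAdd r i)) = A := by
  simp_rw [joinPerm_castAdd]
  conv_rhs => rw [← image_orderEmbOfFin_univ A hA, ← image_univ_equiv σ₁, image_image]
  rfl

end JoinPerm

lemma joinPerm_injective {m r : ℕ} :
    Function.Injective fun x : {A : Finset (Fin (m + r)) // #A = m} ×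
        Equiv.Perm (Fin m) × Equiv.Perm (Fin r) => joinPerm x.1.1 x.1.2 x.2.1 x.2.2 := by
  rintro ⟨⟨A, hA⟩, σ₁, σ₂⟩ ⟨⟨A', hA'⟩, σ₁', σ₂'⟩ h
  dsimp only at h
  obtain rfl : A = A' := by
    rw [← image_joinPerm_castAdd A hA σ₁ σ₂, h, image_joinPerm_castAdd]
  have h₁ : σ₁ = σ₁' := Equiv.ext fun i => by
    simpa using DFunLike.congr_fun h (Fin.castAdd r i)
  have h₂ : σ₂ = σ₂' := Equiv.ext fun j => by
    simpa using DFunLike.congr_fun h (Fin.natAdd m j)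
  rw [h₁, h₂]

noncomputable def joinPermEquiv (m r : ℕ) :
    {A : Finset (Fin (m + r)) // #A = m} × Equiv.Perm (Fin m) × Equiv.Perm (Fin r) ≃
      Equiv.Perm (Fin (m + r)) :=
  Equiv.ofBijective _ <| (Fintype.bijective_iff_injective_and_card _).2
    ⟨joinPerm_injective, by
      rw [Fintype.card_prod, Fintype.card_prod, Fintype.card_finset_len, Fintype.card_perm,
        Fintype.card_perm, Fintype.card_perm, Fintype.card_fin, Fintype.card_fin,
        Fintype.card_fin, ← mul_assoc, ← factorial_add_eq_choose_mul]⟩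

theorem card_perm_of_joinPerm_iff {m r : ℕ} (p : Equiv.Perm (Fin (m + r)) → Prop)
    (p₁ : Equiv.Perm (Fin m) → Prop) (p₂ : Equiv.Perm (Fin r) → Prop)
    (h : ∀ A hA σ₁ σ₂, p (joinPerm A hA σ₁ σ₂) ↔ p₁ σ₁ ∧ p₂ σ₂) :
    Nat.card {σ // p σ} = (m + r).choose m * (Nat.card {σ // p₁ σ} * Nat.card {σ // p₂ σ}) := by
  let e : {σ // p σ} ≃ {A : Finset (Fin (m + r)) // #A = m} × {σ // p₁ σ} × {σ // p₂ σ} :=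
    ((joinPermEquiv m r).subtypeEquiv fun x => (h x.1.1 x.1.2 x.2.1 x.2.2).symm).symm.trans
      { toFun x := ⟨x.1.1, ⟨x.1.2.1, x.2.1⟩, ⟨x.1.2.2, x.2.2⟩⟩
        invFun y := ⟨⟨y.1, y.2.1.1, y.2.2.1⟩, ⟨y.2.1.2, y.2.2.2⟩⟩ }
  rw [Nat.card_congr e, Nat.card_prod, Nat.card_prod, Nat.card_eq_fintype_card,
    Fintype.card_finset_len, Fintype.card_fin]

lemma IsPeak.two_le {n : ℕ} {σ : Equiv.Perm (Fin n)} {i : ℕ} (h : IsPeak σ i) : 2 ≤ i := h.1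

lemma IsPeak.lt {n : ℕ} {σ : Equiv.Perm (Fin n)} {i : ℕ} (h : IsPeak σ i) : i < n := h.2.1

lemma mem_peakSet {n : ℕ} {σ : Equiv.Perm (Fin n)} {i : ℕ} : i ∈ peakSet σ ↔ IsPeak σ i := by
  simpa [peakSet] using IsPeak.lt

/-- `σ` read as a function `ℕ → ℕ` of positions, with junk value `0` past the end; this keeps
the dependent bounds of `IsPeak` out of index arithmetic. -/
def natApply {n : ℕ} (σ : Equiv.Perm (Fin n)) (p : ℕ) : ℕ :=
  if h : p < n then σ ⟨p, h⟩ else 0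

lemma isPeak_iff_natApply {n : ℕ} (σ : Equiv.Perm (Fin n)) (i : ℕ) :
    IsPeak σ i ↔ 2 ≤ i ∧ i < n ∧
      natApply σ (i - 2) < natApply σ (i - 1) ∧ natApply σ i < natApply σ (i - 1) := by
  unfold IsPeak natApply
  constructor
  · rintro ⟨h₂, h₃, h⟩
    simpa [h₂, h₃, show i - 1 < n by omega, show i - 2 < n by omega] using h
  · rintro ⟨h₂, h₃, h⟩
    refine ⟨h₂, h₃, ?_⟩
    simpa [h₂, h₃, show i - 1 < n by omega, show i - 2 < n by omega] using h

section JoinPerm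

variable {m r : ℕ} (A : Finset (Fin (m + r))) (hA : #A = m)
  (σ₁ : Equiv.Perm (Fin m)) (σ₂ : Equiv.Perm (Fin r))

lemma natApply_joinPerm_lt_iff {p q : ℕ} (hp : p < m) (hq : q < m) :
    natApply (joinPerm A hA σ₁ σ₂) p < natApply (joinPerm A hA σ₁ σ₂) q ↔
      natApply σ₁ p < natApply σ₁ q := by
  have key : ∀ s (hs : s < m), natApply (joinPerm A hA σ₁ σ₂) s =
      A.orderEmbOfFin hA (σ₁ ⟨s, hs⟩) := fun s hs => by
    rw [natApply, dif_pos (by omega), ← joinPerm_castAdd]; rfl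
  rw [key p hp, key q hq, natApply, natApply, dif_pos hp, dif_pos hq, ← Fin.lt_def,
    OrderEmbedding.lt_iff_lt, Fin.lt_def]

lemma natApply_joinPerm_add_lt_iff {p q : ℕ} (hp : p < r) (hq : q < r) :
    natApply (joinPerm A hA σ₁ σ₂) (m + p) < natApply (joinPerm A hA σ₁ σ₂) (m + q) ↔
      natApply σ₂ p < natApply σ₂ q := by
  have key : ∀ s (hs : s < r), natApply (joinPerm A hA σ₁ σ₂) (m + s) =
      Aᶜ.orderEmbOfFin (card_compl_of_card_eq hA) (σ₂ ⟨s, hs⟩) := fun s hs => by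
    rw [natApply, dif_pos (by omega), ← joinPerm_natAdd]; rfl
  rw [key p hp, key q hq, natApply, natApply, dif_pos hp, dif_pos hq, ← Fin.lt_def,
    OrderEmbedding.lt_iff_lt, Fin.lt_def]

lemma isPeak_joinPerm_of_lt {i : ℕ} (hi : i < m) :
    IsPeak (joinPerm A hA σ₁ σ₂) i ↔ IsPeak σ₁ i := by
  rw [isPeak_iff_natApply, isPeak_iff_natApply]
  by_cases h₂ : 2 ≤ i
  · rw [natApply_joinPerm_lt_iff A hA σ₁ σ₂ (by omega) (by omega),
      natApply_joinPerm_lt_iff A hA σ₁ σ₂ hi (by omega)]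
    omega
  · omega

lemma isPeak_joinPerm_add {j : ℕ} (hj : 2 ≤ j) :
    IsPeak (joinPerm A hA σ₁ σ₂) (m + j) ↔ IsPeak σ₂ j := by
  rw [isPeak_iff_natApply, isPeak_iff_natApply]
  by_cases hjr : j < r
  · rw [show m + j - 2 = m + (j - 2) by omega, show m + j - 1 = m + (j - 1) by omega,
      natApply_joinPerm_add_lt_iff A hA σ₁ σ₂ (by omega) (by omega),
      natApply_joinPerm_add_lt_iff A hA σ₁ σ₂ hjr (by omega)]
    omega
  · omega

lemma not_isPeak_joinPerm_of_isPeak_left (h : 2 ≤ m → IsPeak σ₁ (m - 1)) :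
    ¬IsPeak (joinPerm A hA σ₁ σ₂) m := by
  intro hm
  have hm' := (isPeak_iff_natApply _ _).1 hm
  have h₁ := (isPeak_iff_natApply _ _).1 (h hm'.1)
  rw [natApply_joinPerm_lt_iff A hA σ₁ σ₂ (by omega) (by omega)] at hm'
  rw [show m - 1 - 1 = m - 2 by omega] at h₁
  omega

lemma not_isPeak_joinPerm_of_isPeak_right (h : IsPeak σ₂ 2) :
    ¬IsPeak (joinPerm A hA σ₁ σ₂) (m + 1) := by
  intro hm
  have hm' := (isPeak_iff_natApply _ _).1 hm
  obtain ⟨-, hr, h₂, -⟩ := (isPeak_iff_natApply _ _).1 h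
  change natApply σ₂ 0 < natApply σ₂ 1 at h₂
  rw [show m + 1 - 1 = m + 0 by omega,
    natApply_joinPerm_add_lt_iff A hA σ₁ σ₂ (by omega) (by omega)] at hm'
  omega

lemma peakSet_joinPerm (h₁ : 2 ≤ m → m - 1 ∈ peakSet σ₁) (h₂ : 2 ∈ peakSet σ₂) :
    peakSet (joinPerm A hA σ₁ σ₂) = peakSet σ₁ ∪ (peakSet σ₂).map (addLeftEmbedding m) := by
  ext i
  simp only [mem_union, mem_map, addLeftEmbedding_apply, mem_peakSet] at h₁ h₂ ⊢
  by_cases hi : i < m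
  · rw [isPeak_joinPerm_of_lt A hA σ₁ σ₂ hi]
    refine ⟨Or.inl, ?_⟩
    rintro (h | ⟨j, -, rfl⟩)
    · exact h
    · omega
  obtain ⟨j, rfl⟩ : ∃ j, i = m + j := ⟨i - m, by omega⟩
  have not_isPeak_left : ¬IsPeak σ₁ (m + j) := fun h => by have := h.lt; omega
  simp only [add_right_inj, exists_eq_right, not_isPeak_left, false_or]
  rcases j with _ | _ | j
  · exact iff_of_false (not_isPeak_joinPerm_of_isPeak_left A hA σ₁ σ₂ h₁)
      fun h => by have := h.two_le; omega
  · exact iff_of_false (not_isPeak_joinPerm_of_isPeak_right A hA σ₁ σ₂ h₂)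
      fun h => by have := h.two_le; omega
  · exact isPeak_joinPerm_add A hA σ₁ σ₂ (by omega)

lemma peakSet_joinPerm_eq_iff {S₁ S₂ : Finset ℕ} (hS₁ : ∀ s ∈ S₁, s < m)
    (hS₂ : ∀ s ∈ S₂, 2 ≤ s) (h₁ : 2 ≤ m → m - 1 ∈ S₁) (h₂ : 2 ∈ S₂) :
    peakSet (joinPerm A hA σ₁ σ₂) = S₁ ∪ S₂.map (addLeftEmbedding m) ↔
      peakSet σ₁ = S₁ ∧ peakSet σ₂ = S₂ := by
  refine ⟨fun h => ⟨?_, ?_⟩, ?_⟩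
  · ext i
    by_cases hi : i < m
    · rw [mem_peakSet, ← isPeak_joinPerm_of_lt A hA σ₁ σ₂ hi, ← mem_peakSet, h]
      simp only [mem_union, mem_map, addLeftEmbedding_apply, or_iff_left_iff_imp]
      rintro ⟨j, -, rfl⟩
      omega
    · exact iff_of_false (fun h => hi (mem_peakSet.1 h).lt) fun h => hi (hS₁ i h)
  · ext j
    by_cases hj : 2 ≤ j
    · rw [mem_peakSet, ← isPeak_joinPerm_add A hA σ₁ σ₂ hj, ← mem_peakSet, h]
      simp only [mem_union, mem_map, addLeftEmbedding_apply, add_right_inj, exists_eq_right,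
        or_iff_right_iff_imp]
      intro h
      have := hS₁ _ h
      omega
    · exact iff_of_false (fun h => hj (mem_peakSet.1 h).two_le) fun h => hj (hS₂ j h)
  · rintro ⟨rfl, rfl⟩
    exact peakSet_joinPerm A hA σ₁ σ₂ h₁ h₂

end JoinPerm

theorem numPeakSet_union_map_add {m r : ℕ} {S₁ S₂ : Finset ℕ} (hS₁ : ∀ s ∈ S₁, s < m)
    (hS₂ : ∀ s ∈ S₂, 2 ≤ s) (h₁ : 2 ≤ m → m - 1 ∈ S₁) (h₂ : 2 ∈ S₂) :
    numPeakSet (m + r) (S₁ ∪ S₂.map (addLeftEmbedding m)) =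
      (m + r).choose m * (numPeakSet m S₁ * numPeakSet r S₂) :=
  card_perm_of_joinPerm_iff _ _ _ fun A hA σ₁ σ₂ =>
    peakSet_joinPerm_eq_iff A hA σ₁ σ₂ hS₁ hS₂ h₁ h₂

lemma compPeaks_append_singleton (d : List ℕ) (x : ℕ) :
    compPeaks (d ++ [x]) = (range d.length).image fun i => (d.take (i + 1)).sum := by
  rw [compPeaks, List.length_append, List.length_singleton, Nat.add_sub_cancel]
  refine image_congr fun i hi => ?_
  rw [List.take_append_of_le_length (by simp at hi; omega)]

lemma compPeaks_cons (x : ℕ) (e : List ℕ) :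
    compPeaks (x :: e) = (range e.length).image fun j => x + (e.take j).sum := by
  simp [compPeaks, List.take_succ_cons]

lemma compPeaks_append_three (d e : List ℕ) :
    compPeaks (d ++ [3] ++ e) =
      compPeaks (d ++ [1]) ∪ (compPeaks ([2] ++ e)).map (addLeftEmbedding (d.sum + 1)) := by
  rw [compPeaks_append_singleton, List.singleton_append, compPeaks_cons, compPeaks,
    List.append_assoc, List.singleton_append, List.length_append, List.length_cons,
    Nat.add_succ_sub_one, range_add_eq_union, map_eq_image, map_eq_image, image_union,
    image_image, image_image]
  congr 1
  · refine image_congr fun i hi => ?_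
    rw [List.take_append_of_le_length (by simp at hi; omega)]
  · refine image_congr fun j _ => ?_
    simp only [Function.comp_apply, addLeftEmbedding_apply, show d.length + j + 1 =
      d.length + (j + 1) by omega, List.take_length_add_append, List.sum_append,
      List.take_succ_cons, List.sum_cons]
    omega

lemma lt_of_mem_compPeaks_append_singleton {d : List ℕ} {x s : ℕ}
    (hs : s ∈ compPeaks (d ++ [x])) : s < d.sum + 1 := by
  rw [compPeaks_append_singleton] at hs
  obtain ⟨i, -, rfl⟩ := mem_image.1 hs
  exact Nat.lt_succ_of_le ((List.take_sublist _ _).sum_le_sum fun _ _ => Nat.zero_le _)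

lemma sum_mem_compPeaks_append_singleton {d : List ℕ} (hd : d ≠ []) (x : ℕ) :
    d.sum ∈ compPeaks (d ++ [x]) := by
  rw [compPeaks_append_singleton]
  refine mem_image.2 ⟨d.length - 1, by simp [List.length_pos_iff.2 hd], ?_⟩
  rw [Nat.sub_add_cancel (List.length_pos_iff.2 hd), List.take_length]

lemma le_of_mem_compPeaks_cons {x : ℕ} {e : List ℕ} {s : ℕ} (hs : s ∈ compPeaks (x :: e)) :
    x ≤ s := by
  rw [compPeaks_cons] at hs
  obtain ⟨j, -, rfl⟩ := mem_image.1 hs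
  exact Nat.le_add_right _ _

lemma mem_compPeaks_cons {e : List ℕ} (he : e ≠ []) (x : ℕ) : x ∈ compPeaks (x :: e) := by
  rw [compPeaks_cons]
  exact mem_image.2 ⟨0, by simp [List.length_pos_iff.2 he], by simp⟩

theorem Pcomp_append_three_append (d e : List ℕ) (he : e ≠ []) :
    Pcomp (d ++ [3] ++ e) =
      (d.sum + 1 + (e.sum + 2)).choose (d.sum + 1) * (Pcomp (d ++ [1]) * Pcomp ([2] ++ e)) := by
  have hsum : (d ++ [3] ++ e).sum = d.sum + 1 + (e.sum + 2) := by simp; omega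
  have hsum₁ : (d ++ [1]).sum = d.sum + 1 := by simp
  have hsum₂ : ([2] ++ e).sum = e.sum + 2 := by simp; omega
  rw [Pcomp, Pcomp, Pcomp, hsum, hsum₁, hsum₂, compPeaks_append_three]
  refine numPeakSet_union_map_add (fun s => lt_of_mem_compPeaks_append_singleton)
    (fun s => le_of_mem_compPeaks_cons) (fun h => ?_) (mem_compPeaks_cons he 2)
  rw [Nat.add_sub_cancel]
  exact sum_mem_compPeaks_append_singleton (fun hd => by simp [hd] at h) 1

lemma sum_chain3 (c : ℕ → List ℕ) (k : ℕ) :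
    (chain3 c k).sum = 3 * k + ∑ i ∈ range (k + 1), (c i).sum := by
  induction k with
  | zero => simp [chain3]
  | succ k ih =>
    rw [chain3, List.sum_append, List.sum_append, ih, sum_range_succ _ (k + 1)]
    simp only [List.sum_singleton]
    ring

theorem Pcomp_chain3_append_one (c : ℕ → List ℕ) (n : ℕ) :
    ((c 0).sum + 1)! * (∏ i ∈ Ioc 0 n, ((c i).sum + 3)!) * Pcomp (chain3 c n ++ [1]) =
      ((chain3 c n).sum + 1)! *
        (Pcomp (c 0 ++ [1]) * ∏ i ∈ Ioc 0 n, Pcomp ([2] ++ c i ++ [1])) := by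
  induction n with
  | zero => simp [chain3]
  | succ n ih =>
    have hsplit := Pcomp_append_three_append (chain3 c n) (c (n + 1) ++ [1]) (by simp)
    have he : (c (n + 1) ++ [1]).sum + 2 = (c (n + 1)).sum + 3 := by simp
    rw [← List.append_assoc, ← chain3, ← List.append_assoc [2], he] at hsplit
    have hsum : (chain3 c (n + 1)).sum + 1 = (chain3 c n).sum + 1 + ((c (n + 1)).sum + 3) := by
      simp only [chain3, List.sum_append, List.sum_singleton]
      ring
    rw [prod_Ioc_succ_top n.zero_le, prod_Ioc_succ_top n.zero_le, hsplit, hsum,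
      factorial_add_eq_choose_mul ((chain3 c n).sum + 1)]
    linear_combination ((chain3 c n).sum + 1 + ((c (n + 1)).sum + 3)).choose
      ((chain3 c n).sum + 1) * ((c (n + 1)).sum + 3)! * Pcomp ([2] ++ c (n + 1) ++ [1]) * ih

theorem counting_formula_general (k : ℕ) (hk : 1 ≤ k) (c : ℕ → List ℕ)
    (hck : c k ≠ []) :
    Nat.factorial ((c 0).sum + 1) *
      (∏ i ∈ Finset.Ioo 0 k, Nat.factorial ((c i).sum + 3)) *
      Nat.factorial ((c k).sum + 2) *
      Pcomp (chain3 c k)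
    = Nat.factorial (3 * k + ∑ i ∈ Finset.range (k + 1), (c i).sum) *
      (Pcomp (c 0 ++ [1]) *
        (∏ i ∈ Finset.Ioo 0 k, Pcomp ([2] ++ c i ++ [1])) *
        Pcomp ([2] ++ c k)) := by
  obtain ⟨n, rfl⟩ : ∃ n, k = n + 1 := ⟨k - 1, by omega⟩
  have hIoo : Ioo 0 (n + 1) = Ioc 0 n := by ext; simp
  have hsum : 3 * (n + 1) + ∑ i ∈ range (n + 1 + 1), (c i).sum =
      (chain3 c n).sum + 1 + ((c (n + 1)).sum + 2) := by
    rw [sum_chain3, sum_range_succ _ (n + 1)]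
    ring
  rw [hIoo, hsum, factorial_add_eq_choose_mul ((chain3 c n).sum + 1), chain3,
    Pcomp_append_three_append _ _ hck]
  linear_combination ((chain3 c n).sum + 1 + ((c (n + 1)).sum + 2)).choose
    ((chain3 c n).sum + 1) * ((c (n + 1)).sum + 2)! * Pcomp ([2] ++ c (n + 1)) *
      Pcomp_chain3_append_one c n

theorem counting_formula (k : ℕ) (hk : 1 ≤ k) (c : ℕ → List ℕ)
    (hpos : ∀ i ≤ k, ∀ x ∈ c i, 0 < x) (hck : c k ≠ []) :
    Nat.factorial ((c 0).sum + 1) *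
      (∏ i ∈ Finset.Ioo 0 k, Nat.factorial ((c i).sum + 3)) *
      Nat.factorial ((c k).sum + 2) *
      Pcomp (chain3 c k)
    = Nat.factorial (3 * k + ∑ i ∈ Finset.range (k + 1), (c i).sum) *
      (Pcomp (c 0 ++ [1]) *
        (∏ i ∈ Finset.Ioo 0 k, Pcomp ([2] ++ c i ++ [1])) *
        Pcomp ([2] ++ c k)) :=
  counting_formula_general k hk c hck
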